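/- No session behaviour admits an infinite sequence of consecutive unlabelled transitions: the unlabelled transition relation ⟶ on session behaviours is well-founded (terminating). -/

import Mathlib

/-- Names of actions. -/
abbrev Name := ℕ

/-- Session behaviours (raw behaviour expressions), with de Bruijn variables.
    `ext l` is an external choice `a₁.σ₁ + ⋯ + aₙ.σₙ`,
    `int l` is an internal choice `ā₁.σ₁ ⊕ ⋯ ⊕ āₙ.σₙ` (a singleton is an output prefix `ā.σ`),
    `fix σ` is `rec x.σ`. -/
inductive SB : Type where
  | one : SB
  | ext : List (Name × SB) → SB
  | int : List (Name × SB) → SB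
  | var : ℕ → SB
  | fix : SB → SB

namespace SB

mutual
/-- Substitution of the (closed) term `t` for de Bruijn variable `k`. -/
def subst (t : SB) : SB → ℕ → SB
  | .one, _ => .one
  | .var n, k => if n = k then t else .var n
  | .ext l, k => .ext (substL t l k)
  | .int l, k => .int (substL t l k)
  | .fix σ, k => .fix (subst t σ (k + 1))
def substL (t : SB) : List (Name × SB) → ℕ → List (Name × SB)
  | [], _ => []
  | p :: l, k => (p.1, subst t p.2 k) :: substL t l k
end

mutual
/-- Syntactic duality: interchange inputs with outputs, `+` with `⊕`. -/
def dual : SB → SB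
  | .one => .one
  | .var n => .var n
  | .ext l => .int (dualL l)
  | .int l => .ext (dualL l)
  | .fix σ => .fix (dual σ)
def dualL : List (Name × SB) → List (Name × SB)
  | [] => []
  | p :: l => (p.1, dual p.2) :: dualL l
end

/-- All free variables are `< k`. -/
inductive ClosedAt : ℕ → SB → Prop where
  | one : ∀ {k}, ClosedAt k .one
  | var : ∀ {k n}, n < k → ClosedAt k (.var n)
  | ext : ∀ {k l}, (∀ p ∈ l, ClosedAt k p.2) → ClosedAt k (.ext l)
  | int : ∀ {k l}, (∀ p ∈ l, ClosedAt k p.2) → ClosedAt k (.int l)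
  | fix : ∀ {k σ}, ClosedAt (k + 1) σ → ClosedAt k (.fix σ)

/-- Guardedness: after stripping `rec`s one reaches a prefix/choice constructor (not a variable). -/
inductive Guarded : SB → Prop where
  | one : Guarded .one
  | ext : ∀ {l}, Guarded (.ext l)
  | int : ∀ {l}, Guarded (.int l)
  | fix : ∀ {σ}, Guarded σ → Guarded (.fix σ)

/-- Well-formedness: choices are nonempty with pairwise distinct names, recursion is guarded. -/
inductive WF : SB → Prop where
  | one : WF .one
  | var : ∀ {n}, WF (.var n)
  | ext : ∀ {l}, l ≠ [] → (l.map Prod.fst).Nodup → (∀ p ∈ l, WF p.2) → WF (.ext l)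
  | int : ∀ {l}, l ≠ [] → (l.map Prod.fst).Nodup → (∀ p ∈ l, WF p.2) → WF (.int l)
  | fix : ∀ {σ}, Guarded σ → WF σ → WF (.fix σ)

/-- `σ` is a session behaviour: well formed and closed. -/
def SBok (σ : SB) : Prop := WF σ ∧ ClosedAt 0 σ

/-- Visible actions. -/
inductive Act : Type where
  | inp : Name → Act
  | out : Name → Act
deriving DecidableEq

/-- The dual action. -/
def Act.dualAct : Act → Act
  | .inp a => .out a
  | .out a => .inp a

/-- Unlabelled transitions: internal-choice selection (of a genuine choice, `n ≥ 2`)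
    and recursion unfolding. -/
inductive Red : SB → SB → Prop where
  | sel : ∀ {l} {p : Name × SB}, 2 ≤ l.length → p ∈ l → Red (.int l) (.int [p])
  | unf : ∀ {σ}, Red (.fix σ) (subst (.fix σ) σ 0)

/-- Recursion-unfolding steps only. -/
inductive URed : SB → SB → Prop where
  | unf : ∀ {σ}, URed (.fix σ) (subst (.fix σ) σ 0)

def RedStar : SB → SB → Prop := Relation.ReflTransGen Red

/-- Labelled transitions. -/
inductive Step : SB → Act → SB → Prop where
  | inp : ∀ {l a σ}, (a, σ) ∈ l → Step (.ext l) (.inp a) σ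
  | out : ∀ {a σ}, Step (.int [(a, σ)]) (.out a) σ

/-- Weak labelled transition `σ ⟹α σ'`. -/
def VStep (σ : SB) (α : Act) (σ' : SB) : Prop := ∃ σ₁, RedStar σ σ₁ ∧ Step σ₁ α σ'

/-- The client can weakly perform the input `a`. -/
def WInp (ρ : SB) (a : Name) : Prop := ∃ ρ', VStep ρ (.inp a) ρ'

/-- Synchronization actions. -/
inductive SyncAct : Type where
  | tau : SyncAct
  | skp : SyncAct
deriving DecidableEq

/-- Unlabelled steps of a client/server pair. -/
inductive PRed : SB × SB → SB × SB → Prop where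
  | left : ∀ {ρ ρ' σ}, Red ρ ρ' → PRed (ρ, σ) (ρ', σ)
  | right : ∀ {ρ σ σ'}, Red σ σ' → PRed (ρ, σ) (ρ, σ')

/-- Labelled steps of a client/server pair: `τ` handshake of dual actions, and
    `skp`, discarding a server output `ā` that the client cannot weakly input. -/
inductive PLab : SB × SB → SyncAct → SB × SB → Prop where
  | tau : ∀ {ρ ρ' σ σ' α}, Step ρ α ρ' → Step σ α.dualAct σ' → PLab (ρ, σ) .tau (ρ', σ')
  | skp : ∀ {ρ σ σ' a}, ¬ WInp ρ a → Step σ (.out a) σ' → PLab (ρ, σ) .skp (ρ, σ')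

def PRedStar : SB × SB → SB × SB → Prop := Relation.ReflTransGen PRed

/-- `q ⟹ξ q'` : a `ξ`-labelled step up to unlabelled steps. -/
def SyncStep (q : SB × SB) (ξ : SyncAct) (q' : SB × SB) : Prop :=
  ∃ q₁ q₂, PRedStar q q₁ ∧ PLab q₁ ξ q₂ ∧ PRedStar q₂ q'

def SyncReach : SB × SB → SB × SB → Prop :=
  Relation.ReflTransGen (fun q q' => ∃ ξ, SyncStep q ξ q')

/-- An infinite sequence of synchronization actions is definitely-skp. -/
def DefinitelySkp (ξs : ℕ → SyncAct) : Prop := ∃ k, ∀ h, k < h → ξs h = SyncAct.skp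

/-- skp-compliance `ρ ⊣skp σ`: every finite synchronization trace ends in success
    (the client is `1` whenever no further synchronization step is possible), and
    no infinite synchronization trace (with the client never equal to `1`) is definitely-skp. -/
def Compliant (ρ σ : SB) : Prop :=
  (∀ q, SyncReach (ρ, σ) q → q.1 ≠ SB.one → ∃ ξ q', SyncStep q ξ q') ∧
  (∀ (f : ℕ → SB × SB) (ξs : ℕ → SyncAct),
      f 0 = (ρ, σ) → (∀ n, SyncStep (f n) (ξs n) (f (n + 1))) →
      (∀ n, (f n).1 ≠ SB.one) → ¬ DefinitelySkp ξs)

/-- Standard compliance `ρ ⊣ σ`: only `τ` handshakes; every reachable stuck state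
    has client `1`. -/
def StdCompliant (ρ σ : SB) : Prop :=
  ∀ q, Relation.ReflTransGen (fun x y => PRed x y ∨ PLab x SyncAct.tau y) (ρ, σ) q →
    (∀ q', ¬ (PRed q q' ∨ PLab q SyncAct.tau q')) → q.1 = SB.one

/-- skp-subbehaviour: every skp-compliant client of `σ` is one of `σ'`. -/
def SubB (σ σ' : SB) : Prop := ∀ ρ, SBok ρ → Compliant ρ σ → Compliant ρ σ'

/-- Standard subbehaviour. -/
def SubStd (σ σ' : SB) : Prop := ∀ ρ, SBok ρ → StdCompliant ρ σ → StdCompliant ρ σ'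

/-- `ρ ⇓ r`: `r` is the (unique) stuck term reached from `ρ` by unfolding recursion. -/
def Conv (ρ r : SB) : Prop :=
  Relation.ReflTransGen URed ρ r ∧ ∀ r', ¬ URed r r'

/-- Finite maximal traces of visible actions. -/
inductive FTrace : SB → List Act → Prop where
  | nil : ∀ {σ}, (∀ α σ', ¬ VStep σ α σ') → FTrace σ []
  | cons : ∀ {σ σ' α tr}, VStep σ α σ' → FTrace σ' tr → FTrace σ (α :: tr)

/-- `Syncable α σ`: every (finite maximal or infinite) trace of the server `σ` consists of a
    finite prefix of outputs, none equal to the dual of `α`, followed by the dual of `α`. -/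
def Syncable (α : Act) (σ : SB) : Prop :=
  (∀ tr, FTrace σ tr →
      ∃ pre post, tr = pre ++ α.dualAct :: post ∧
        ∀ β ∈ pre, (∃ b, β = Act.out b) ∧ β ≠ α.dualAct) ∧
  (∀ (f : ℕ → SB) (g : ℕ → Act), f 0 = σ → (∀ n, VStep (f n) (g n) (f (n + 1))) →
      ∃ n, g n = α.dualAct ∧ ∀ m, m < n → (∃ b, g m = Act.out b) ∧ g m ≠ α.dualAct)

/-- `q ⟹skp* τ q'`. -/
def SkpsTau (q q' : SB × SB) : Prop :=
  ∃ q₁, Relation.ReflTransGen (fun x y => SyncStep x SyncAct.skp y) q q₁ ∧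
    SyncStep q₁ SyncAct.tau q'

/-- The coinductive skip-compliance operator `H`. -/
def Hop (R : SB × SB → Prop) (q : SB × SB) : Prop :=
  Conv q.1 .one ∨
  ((∀ l, Conv q.1 (.ext l) →
      (∃ p ∈ l, Syncable (.inp p.1) q.2) ∧
      ∀ p ∈ l, ∀ σ', SkpsTau (.ext [p], q.2) (p.2, σ') → R (p.2, σ')) ∧
   (∀ l, Conv q.1 (.int l) →
      (∀ p ∈ l, Syncable (.out p.1) q.2) ∧
      ∀ p ∈ l, ∀ σ', SkpsTau (.int [p], q.2) (p.2, σ') → R (p.2, σ')))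

end SB

/-- The relation `⊑` on (nonempty) finite sequences of names. -/
inductive SubSeq {α : Type} : List α → List α → Prop where
  | single : ∀ {b : α} {pre : List α}, b ∉ pre → SubSeq [b] (pre ++ [b])
  | cons : ∀ {b : α} {pre u v : List α}, b ∉ pre → SubSeq u v → SubSeq (b :: u) (pre ++ b :: v)

open SB

/-!
Give every behaviour the height `redHeight`: the number of leading `rec`s, plus one if what
they guard is a genuine internal choice. Substitution into a guarded term preserves both its
leading `rec`s and the arity of the choice they guard, so unfolding `rec x.σ` lowers the height
by exactly one, and selecting a branch of a choice lowers it from one to zero. Guardedness is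
preserved by both kinds of step, so the height strictly decreases along every reduction.
-/

namespace SB

def redHeight : SB → ℕ
  | .fix σ => redHeight σ + 1
  | .int l => if 2 ≤ l.length then 1 else 0
  | _ => 0

@[simp]
theorem length_substL (t : SB) (l : List (Name × SB)) (k : ℕ) :
    (substL t l k).length = l.length := by
  induction l with
  | nil => rfl
  | cons p l ih => simp [substL, ih]

theorem Guarded.subst {σ : SB} (h : Guarded σ) (t : SB) (k : ℕ) : Guarded (SB.subst t σ k) := by
  induction h generalizing k with
  | one => exact .one
  | ext => exact .ext
  | int => exact .int
  | fix _ ih => exact .fix (ih _)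

theorem Guarded.redHeight_subst {σ : SB} (h : Guarded σ) (t : SB) (k : ℕ) :
    redHeight (SB.subst t σ k) = redHeight σ := by
  induction h generalizing k with
  | one | ext => rfl
  | int => simp [SB.subst, redHeight]
  | fix _ ih => simp [SB.subst, redHeight, ih]

theorem Guarded.of_red {σ σ' : SB} (h : Guarded σ) : Red σ σ' → Guarded σ'
  | .sel _ _ => .int
  | .unf => by cases h with | fix hσ => exact hσ.subst _ _

theorem Guarded.redHeight_lt_of_red {σ σ' : SB} (h : Guarded σ) :
    Red σ σ' → redHeight σ' < redHeight σ
  | .sel hl _ => by simp [redHeight, hl]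
  | .unf => by
    cases h with
    | fix hσ => rw [hσ.redHeight_subst]; exact Nat.lt_succ_self _

theorem Guarded.acc_red {σ : SB} (h : Guarded σ) : Acc (fun x y => Red y x) σ :=
  (measure redHeight).wf.induction (C := fun σ => Guarded σ → Acc (fun x y => Red y x) σ) σ
    (fun _ ih hσ => ⟨_, fun _ hred => ih _ (hσ.redHeight_lt_of_red hred) (hσ.of_red hred)⟩) h

theorem SBok.guarded {σ : SB} (h : SBok σ) : Guarded σ := by
  obtain ⟨hwf, hclosed⟩ := h
  cases hwf with
  | one => exact .one
  | var => cases hclosed with | var hn => exact absurd hn (Nat.not_lt_zero _)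
  | ext => exact .ext
  | int => exact .int
  | fix hσ => exact .fix hσ

end SB

/-- the unlabelled transition relation is terminating (well-founded)
    from every session behaviour. -/
theorem red_terminating : ∀ σ : SB, SBok σ → Acc (fun x y => SB.Red y x) σ :=
  fun _ hσ => hσ.guarded.acc_red
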